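/- arXiv:2511.17015 — 5 statements merged into one kernel-verified Lean document; each statement's English description precedes it below -/
import Mathlib

section
/- Let m > 0, k > 0, T > 0, n ∈ ℕ with n ≥ 1, Δt = T/n, and let M : [0,T] → ℝ be a bounded function with grid increments ΔM_k = M((k+1)T/n) − M(kT/n). Let (z_k)_{k=0,…,n} be positive reals with z_0 > 0 satisfying the implicit Euler recursion z_{k+1} = z_k + b(z_{k+1})·Δt + ΔM_k, where b(x) = (m + 1/2)·x⁻¹ − (k/2)·x. Then for every k ∈ {0,…,n}, 0 < z_k ≤ z_0 + |b(z_0)|·T + 2·sup_{t∈[0,T]} |M_t|. -/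
/-- Uniform boundedness of the implicit Euler scheme: every positive solution of
the implicit Euler recursion on the uniform grid of `[0,T]` with bounded driving path `M`
satisfies `0 < z_k ≤ z_0 + |b z_0| T + 2 sup_{[0,T]} |M|`. -/
theorem stmt_1 (m k T : ℝ) (hm : 0 < m) (hk : 0 < k) (hT : 0 < T)
    (n : ℕ) (hn : 1 ≤ n) (M : ℝ → ℝ)
    (hMbdd : BddAbove ((fun t => |M t|) '' Set.Icc (0:ℝ) T))
    (b : ℝ → ℝ) (hb : ∀ x : ℝ, 0 < x → b x = (m + 1/2) * x⁻¹ - (k/2) * x)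
    (z : ℕ → ℝ) (hz0 : 0 < z 0)
    (hrec : ∀ i < n, 0 < z (i+1) ∧
      z (i+1) = z i + b (z (i+1)) * (T / n)
        + (M (((i:ℝ)+1) * T / n) - M ((i:ℝ) * T / n))) :
    ∀ i ≤ n, 0 < z i ∧
      z i ≤ z 0 + |b (z 0)| * T + 2 * sSup ((fun t => |M t|) '' Set.Icc (0:ℝ) T) := by
  set S := sSup ((fun t => |M t|) '' Set.Icc (0:ℝ) T) with hS
  have hnpos : (0:ℝ) < (n:ℝ) := by
    have : 0 < n := hn
    exact_mod_cast this
  have hdt : 0 < T / n := div_pos hT hnpos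
  have hMle : ∀ t ∈ Set.Icc (0:ℝ) T, |M t| ≤ S := fun t ht => le_csSup hMbdd ⟨t, ht, rfl⟩
  have hgrid : ∀ i : ℕ, i ≤ n → ((i:ℝ) * T / n) ∈ Set.Icc (0:ℝ) T := by
    intro i hi
    constructor
    · positivity
    · rw [div_le_iff₀ hnpos]
      have : (i:ℝ) ≤ n := by exact_mod_cast hi
      nlinarith
  have habs : (0:ℝ) ≤ |b (z 0)| := abs_nonneg _
  have hbmono : ∀ x, z 0 ≤ x → b x ≤ |b (z 0)| := by
    intro x hx
    have hx0 : 0 < x := lt_of_lt_of_le hz0 hx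
    have hinv : x⁻¹ ≤ (z 0)⁻¹ := inv_anti₀ hz0 hx
    have : b x ≤ b (z 0) := by
      rw [hb x hx0, hb (z 0) hz0]
      nlinarith
    exact this.trans (le_abs_self _)
  have key : ∀ i ≤ n, ∃ j, j ≤ i ∧
      z i ≤ z 0 + |b (z 0)| * (((i - j : ℕ) : ℝ) * (T / n))
        + (M ((i:ℝ) * T / n) - M ((j:ℝ) * T / n)) := by
    intro i
    induction i with
    | zero => intro _; exact ⟨0, le_refl _, by simp⟩
    | succ i ih =>
      intro hin
      have hi : i < n := hin
      obtain ⟨j, hji, hiz⟩ := ih (le_of_lt hi)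
      obtain ⟨hpos, heq⟩ := hrec i hi
      by_cases hc : z (i+1) ≤ z 0
      · refine ⟨i+1, le_refl _, ?_⟩
        simp only [Nat.sub_self, Nat.cast_zero, zero_mul, mul_zero, sub_self]
        linarith
      · refine ⟨j, by omega, ?_⟩
        have hb1 : b (z (i+1)) ≤ |b (z 0)| := hbmono _ (le_of_lt (not_le.mp hc))
        have hcast : (((i + 1 - j : ℕ)) : ℝ) = ((i - j : ℕ) : ℝ) + 1 := by
          have : i + 1 - j = (i - j) + 1 := by omega
          rw [this]; push_cast; ring
        have hmul : b (z (i+1)) * (T / n) ≤ |b (z 0)| * (T / n) :=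
          mul_le_mul_of_nonneg_right hb1 (le_of_lt hdt)
        have hM : (((i+1 : ℕ):ℝ)) * T / n = ((i:ℝ)+1) * T / n := by push_cast; ring
        rw [hM, hcast]
        have hexp : |b (z 0)| * ((((i - j : ℕ):ℝ) + 1) * (T/n))
            = |b (z 0)| * (((i - j : ℕ):ℝ) * (T/n)) + |b (z 0)| * (T/n) := by ring
        linarith [heq, hiz, hmul, hexp]
  intro i hi
  constructor
  · cases i with
    | zero => exact hz0
    | succ i => exact (hrec i (by omega)).1
  · obtain ⟨j, hji, hle⟩ := key i hi
    have h1 : ((i - j : ℕ):ℝ) * (T/n) ≤ T := by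
      have hij : ((i - j : ℕ):ℝ) ≤ (n:ℝ) := by
        have : i - j ≤ n := by omega
        exact_mod_cast this
      calc ((i - j : ℕ):ℝ) * (T/n) ≤ (n:ℝ) * (T/n) :=
            mul_le_mul_of_nonneg_right hij (le_of_lt hdt)
        _ = T := by field_simp
    have hMi : |M ((i:ℝ) * T / n)| ≤ S := hMle _ (hgrid i hi)
    have hMj : |M ((j:ℝ) * T / n)| ≤ S := hMle _ (hgrid j (le_trans hji hi))
    have h2 : |b (z 0)| * (((i - j : ℕ):ℝ) * (T/n)) ≤ |b (z 0)| * T :=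
      mul_le_mul_of_nonneg_left h1 habs
    have h3 : M ((i:ℝ) * T / n) ≤ S := (le_abs_self _).trans hMi
    have h4 : -S ≤ M ((j:ℝ) * T / n) := neg_le_of_abs_le hMj
    linarith
end

section
/- Let I ⊆ ℝ be a set, b : I → ℝ an antitone (nonincreasing) function, Δt ≥ 0, and let u, v ∈ I and w ∈ ℝ satisfy u − v = w + (b(u) − b(v))·Δt. Then |u − v| ≤ |w|. -/
/-- One-step contraction for the implicit Euler step with antitone drift:
if `u - v = w + (b u - b v) Δt` with `b` antitone on `I`, `u, v ∈ I`, `Δt ≥ 0`,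
then `|u - v| ≤ |w|`. -/
theorem stmt_2 (I : Set ℝ) (b : ℝ → ℝ) (hb : AntitoneOn b I)
    (Δt : ℝ) (hΔt : 0 ≤ Δt) (u v : ℝ) (hu : u ∈ I) (hv : v ∈ I) (w : ℝ)
    (h : u - v = w + (b u - b v) * Δt) : |u - v| ≤ |w| := by
  have hkey : (b u - b v) * (u - v) ≤ 0 := by
    rcases le_total u v with huv | huv
    · have := hb hu hv huv
      nlinarith
    · have := hb hv hu huv
      nlinarith
  have h3 : (b u - b v) * (u - v) * Δt ≤ 0 := mul_nonpos_of_nonpos_of_nonneg hkey hΔt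
  have h4 : (u - v) * (u - v) = (u - v) * w + (b u - b v) * (u - v) * Δt := by
    rw [h]; ring
  have h1 : (u - v) * (u - v) ≤ (u - v) * w := by linarith
  have h2 : (u - v) * w ≤ |u - v| * |w| := by
    calc (u - v) * w ≤ |(u - v) * w| := le_abs_self _
    _ = |u - v| * |w| := abs_mul _ _
  nlinarith [abs_nonneg (u - v), abs_nonneg w, sq_abs (u - v), abs_le_abs (le_refl (u-v))]
end

section
/- Let 0 ≤ s₀ < s₁, α ∈ (0,1], and let z : [s₀, s₁] → ℝ be α-Hölder continuous with constant K, i.e. |z_t − z_s| ≤ K·|t − s|^α for all s, t ∈ [s₀, s₁]. Let J ⊆ ℝ be an interval containing the range of z, and let b : J → ℝ be Lipschitz with constant L. Then | b(z_{s₁})·(s₁ − s₀) − ∫_{s₀}^{s₁} b(z_s) ds | ≤ L·K·(s₁ − s₀)^{1+α}/(1 + α). -/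
/-!
The error is `∫_{s₀}^{s₁} (b(z_{s₁}) - b(z_s)) ds`, and `b ∘ z` is `α`-Hölder with constant `L K`,
so the integrand is bounded by `L K (s₁ - s)^α`, whose integral is `L K (s₁ - s₀)^{1+α} / (1+α)`.
-/

open MeasureTheory Set

theorem continuousOn_of_dist_le_mul_rpow {X Y : Type*} [PseudoMetricSpace X] [PseudoMetricSpace Y]
    {f : X → Y} {s : Set X} {C r : ℝ} (hr : 0 < r)
    (hf : ∀ x ∈ s, ∀ y ∈ s, dist (f x) (f y) ≤ C * dist x y ^ r) : ContinuousOn f s := by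
  have hHolder : HolderOnWith C.toNNReal r.toNNReal f s := by
    intro x hx y hy
    rw [edist_dist, edist_dist, Real.coe_toNNReal r hr.le,
      ENNReal.ofReal_rpow_of_nonneg dist_nonneg hr.le, ENNReal.ofNNReal_toNNReal,
      ← ENNReal.ofReal_mul' (by positivity)]
    exact ENNReal.ofReal_le_ofReal (hf x hx y hy)
  exact hHolder.continuousOn (Real.toNNReal_pos.mpr hr)

theorem integral_sub_rpow {a b r : ℝ} (hr : 0 < r) :
    ∫ t in a..b, (b - t) ^ r = (b - a) ^ (1 + r) / (1 + r) := by
  rw [intervalIntegral.integral_comp_sub_left (fun x => x ^ r), sub_self,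
    integral_rpow (Or.inl (by linarith)), Real.zero_rpow (by linarith), add_comm r]
  ring

theorem norm_smul_sub_integral_le_of_norm_sub_le_rpow {E : Type*} [NormedAddCommGroup E]
    [NormedSpace ℝ E] [CompleteSpace E] {g : ℝ → E} {a b C r : ℝ} (hab : a ≤ b) (hr : 0 < r)
    (hg : ∀ s ∈ Icc a b, ∀ t ∈ Icc a b, ‖g t - g s‖ ≤ C * |t - s| ^ r) :
    ‖(b - a) • g b - ∫ t in a..b, g t‖ ≤ C * (b - a) ^ (1 + r) / (1 + r) := by
  have hcont : ContinuousOn g (Icc a b) :=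
    continuousOn_of_dist_le_mul_rpow hr fun x hx y hy => by
      simpa only [dist_eq_norm, Real.norm_eq_abs] using hg y hy x hx
  have hint : IntervalIntegrable g volume a b :=
    (hcont.mono (uIcc_of_le hab).subset).intervalIntegrable
  have hmajorant : ∀ t ∈ Ioc a b, ‖g b - g t‖ ≤ C * (b - t) ^ r := fun t ht => by
    simpa only [abs_of_nonneg (sub_nonneg.mpr ht.2)] using
      hg t (Ioc_subset_Icc_self ht) b (right_mem_Icc.mpr hab)
  calc ‖(b - a) • g b - ∫ t in a..b, g t‖ = ‖∫ t in a..b, (g b - g t)‖ := by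
        rw [intervalIntegral.integral_sub intervalIntegrable_const hint,
          intervalIntegral.integral_const]
    _ ≤ ∫ t in a..b, C * (b - t) ^ r :=
        intervalIntegral.norm_integral_le_of_norm_le hab
          (ae_of_all _ hmajorant)
          (Continuous.intervalIntegrable (by fun_prop (disch := exact hr.le)) _ _)
    _ = C * (b - a) ^ (1 + r) / (1 + r) := by
        rw [intervalIntegral.integral_const_mul, integral_sub_rpow hr, mul_div_assoc]

theorem stmt_3_general (s₀ s₁ : ℝ) (hs : s₀ < s₁)
    (α : ℝ) (hα0 : 0 < α)
    (z : ℝ → ℝ) (K : ℝ)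
    (hHolder : ∀ s ∈ Set.Icc s₀ s₁, ∀ t ∈ Set.Icc s₀ s₁, |z t - z s| ≤ K * |t - s| ^ α)
    (J : Set ℝ) (hJ : ∀ s ∈ Set.Icc s₀ s₁, z s ∈ J)
    (b : ℝ → ℝ) (L : ℝ) (hL : 0 ≤ L)
    (hLip : ∀ x ∈ J, ∀ y ∈ J, |b x - b y| ≤ L * |x - y|) :
    |b (z s₁) * (s₁ - s₀) - ∫ s in s₀..s₁, b (z s)|
      ≤ L * K * (s₁ - s₀) ^ (1 + α) / (1 + α) := by
  have hcomp : ∀ s ∈ Icc s₀ s₁, ∀ t ∈ Icc s₀ s₁,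
      ‖b (z t) - b (z s)‖ ≤ L * K * |t - s| ^ α := fun s hsI t htI =>
    calc |b (z t) - b (z s)| ≤ L * |z t - z s| := hLip _ (hJ t htI) _ (hJ s hsI)
      _ ≤ L * (K * |t - s| ^ α) := mul_le_mul_of_nonneg_left (hHolder s hsI t htI) hL
      _ = L * K * |t - s| ^ α := (mul_assoc _ _ _).symm
  simpa only [smul_eq_mul, mul_comm, Real.norm_eq_abs] using
    norm_smul_sub_integral_le_of_norm_sub_le_rpow hs.le hα0 hcomp

/-- Local truncation error of the right-endpoint quadrature: if `z` is
`α`-Hölder with constant `K` on `[s₀, s₁]` and `b` is `L`-Lipschitz on an interval `J`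
containing the range of `z`, then
`|b(z_{s₁})(s₁ - s₀) - ∫_{s₀}^{s₁} b(z_s) ds| ≤ L K (s₁ - s₀)^{1+α} / (1+α)`. -/
theorem stmt_3 (s₀ s₁ : ℝ) (hs₀ : 0 ≤ s₀) (hs : s₀ < s₁)
    (α : ℝ) (hα0 : 0 < α) (hα1 : α ≤ 1)
    (z : ℝ → ℝ) (K : ℝ) (hK : 0 ≤ K)
    (hHolder : ∀ s ∈ Set.Icc s₀ s₁, ∀ t ∈ Set.Icc s₀ s₁, |z t - z s| ≤ K * |t - s| ^ α)
    (J : Set ℝ) (hJconn : J.OrdConnected) (hJ : ∀ s ∈ Set.Icc s₀ s₁, z s ∈ J)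
    (b : ℝ → ℝ) (L : ℝ) (hL : 0 ≤ L)
    (hLip : ∀ x ∈ J, ∀ y ∈ J, |b x - b y| ≤ L * |x - y|) :
    |b (z s₁) * (s₁ - s₀) - ∫ s in s₀..s₁, b (z s)|
      ≤ L * K * (s₁ - s₀) ^ (1 + α) / (1 + α) :=
  stmt_3_general s₀ s₁ hs α hα0 z K hHolder J hJ b L hL hLip
end

section
/- Let m > 0, k > 0, T > 0, α ∈ (0,1), and b(x) = (m + 1/2)·x⁻¹ − (k/2)·x. Let M : [0,T] → ℝ be α-Hölder continuous, and let z : [0,T] → ℝ be α-Hölder continuous with inf_{t∈[0,T]} z_t > 0 and satisfy z_t = z_0 + ∫_0^t b(z_s) ds + (M_t − M_0) for all t ∈ [0,T]. For each n ≥ 1 let (z_k^n)_{k=0,…,n} be the unique positive implicit Euler approximation on the uniform grid t_k^n = kT/n with z_0^n = z_0, and let z^n : [0,T] → ℝ be its piecewise linear interpolation, z^n_t = z_k^n + ((z_{k+1}^n − z_k^n)/(t_{k+1}^n − t_k^n))·(t − t_k^n) for t ∈ (t_k^n, t_{k+1}^n]. Then there exists a constant C > 0, depending only on T, m, k, the Hölder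 constants of M and z, and the bounds on z, such that sup_{t∈[0,T]} |z^n_t − z_t| ≤ C·n^{−α} for all n ≥ 1. -/
open Set intervalIntegral in
private lemma holder_cont59 {K β T : ℝ} (hβ : 0 < β) {z : ℝ → ℝ}
    (h : ∀ s ∈ Icc (0:ℝ) T, ∀ t ∈ Icc (0:ℝ) T, |z t - z s| ≤ K * |t - s| ^ β) :
    ContinuousOn z (Icc 0 T) := by
  intro t0 ht0
  rw [Metric.continuousWithinAt_iff]
  intro ε hε
  set Kp := |K| + 1 with hKp
  have hKp0 : 0 < Kp := by positivity
  refine ⟨(ε / Kp) ^ β⁻¹, by positivity, ?_⟩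
  intro t ht hd
  have h1 : |z t - z t0| ≤ K * |t - t0| ^ β := h t0 ht0 t ht
  have h2 : |t - t0| ^ β < ((ε / Kp) ^ β⁻¹) ^ β := by
    apply Real.rpow_lt_rpow (abs_nonneg _) _ hβ
    rwa [Real.dist_eq] at hd
  rw [Real.rpow_inv_rpow (by positivity) hβ.ne'] at h2
  have h3 : K * |t - t0| ^ β ≤ Kp * |t - t0| ^ β := by
    apply mul_le_mul_of_nonneg_right _ (Real.rpow_nonneg (abs_nonneg _) _)
    simp only [hKp]; linarith [le_abs_self K]
  rw [Real.dist_eq]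
  calc |z t - z t0| ≤ Kp * |t - t0| ^ β := h1.trans h3
    _ < Kp * (ε / Kp) := mul_lt_mul_of_pos_left h2 hKp0
    _ = ε := by field_simp

set_option maxHeartbeats 2000000 in
/-- Pathwise convergence of the implicit Euler scheme for the singular equation
`dz = b(z) dt + dM` with `b x = (m + 1/2) x⁻¹ - (k/2) x`: if `M` and `z` are `α`-Hölder and
`z` is bounded away from `0` on `[0,T]`, then the piecewise linear interpolation `z^n` of
the positive implicit Euler approximations satisfies
`sup_{[0,T]} |z^n - z| ≤ C n^{-α}` for all `n ≥ 1`, for some constant `C > 0`. -/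
theorem stmt_5 (m k T α : ℝ) (hm : 0 < m) (hk : 0 < k) (hT : 0 < T)
    (hα : α ∈ Set.Ioo (0:ℝ) 1)
    (b : ℝ → ℝ) (hb : ∀ x : ℝ, 0 < x → b x = (m + 1/2) * x⁻¹ - (k/2) * x)
    (M z : ℝ → ℝ) (KM Kz : ℝ)
    (hMHolder : ∀ s ∈ Set.Icc (0:ℝ) T, ∀ t ∈ Set.Icc (0:ℝ) T,
      |M t - M s| ≤ KM * |t - s| ^ α)
    (hzHolder : ∀ s ∈ Set.Icc (0:ℝ) T, ∀ t ∈ Set.Icc (0:ℝ) T,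
      |z t - z s| ≤ Kz * |t - s| ^ α)
    (a : ℝ) (ha : 0 < a) (hinf : ∀ t ∈ Set.Icc (0:ℝ) T, a ≤ z t)
    (hzeq : ∀ t ∈ Set.Icc (0:ℝ) T,
      z t = z 0 + (∫ s in (0:ℝ)..t, b (z s)) + (M t - M 0))
    (zn : ℕ → ℕ → ℝ)
    (hzn0 : ∀ n : ℕ, zn n 0 = z 0)
    (hznrec : ∀ n : ℕ, 1 ≤ n → ∀ i < n, 0 < zn n (i+1) ∧
      zn n (i+1) = zn n i + b (zn n (i+1)) * (T / n)
        + (M (((i:ℝ)+1) * T / n) - M ((i:ℝ) * T / n))) :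
    ∃ C > 0, ∀ n : ℕ, 1 ≤ n → ∀ zin : ℝ → ℝ,
      (zin 0 = z 0 ∧
        ∀ i < n, ∀ t ∈ Set.Ioc ((i:ℝ) * T / n) (((i:ℝ)+1) * T / n),
          zin t = zn n i + ((zn n (i+1) - zn n i) / (T / n)) * (t - (i:ℝ) * T / n)) →
      ∀ t ∈ Set.Icc (0:ℝ) T, |zin t - z t| ≤ C * (n:ℝ) ^ (-α) := by
  obtain ⟨hα0, hα1⟩ := hα
  have hKz : 0 ≤ Kz := by
    have h := hzHolder 0 ⟨le_refl 0, hT.le⟩ T ⟨hT.le, le_refl T⟩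
    have hTα : 0 < |T - (0:ℝ)| ^ α := by
      apply Real.rpow_pos_of_pos; rw [sub_zero, abs_of_pos hT]; exact hT
    nlinarith [abs_nonneg (z T - z 0)]
  set L : ℝ := (m + 1/2)/a^2 + k/2 with hLdef
  have hL0 : 0 < L := by positivity
  have hz0 : ∀ t ∈ Set.Icc (0:ℝ) T, 0 < z t := fun t ht => ha.trans_le (hinf t ht)
  set g : ℝ → ℝ := fun s => (m + 1/2) * (z s)⁻¹ - (k/2) * z s with hgdef
  have hbz : ∀ s ∈ Set.Icc (0:ℝ) T, b (z s) = g s := fun s hs => hb (z s) (hz0 s hs)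
  have hblip : ∀ x y : ℝ, a ≤ x → a ≤ y → |b x - b y| ≤ L * |x - y| := by
    intro x y hx hy
    have hx0 : 0 < x := ha.trans_le hx
    have hy0 : 0 < y := ha.trans_le hy
    have h1 : b x - b y = -(((m + 1/2) * (x*y)⁻¹ + k/2) * (x - y)) := by
      rw [hb x hx0, hb y hy0]; field_simp; ring
    rw [h1, abs_neg, abs_mul, abs_of_pos (by positivity)]
    apply mul_le_mul_of_nonneg_right _ (abs_nonneg _)
    have h2 : (m + 1/2) * (x*y)⁻¹ ≤ (m + 1/2)/a^2 := by
      rw [div_eq_mul_inv]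
      apply mul_le_mul_of_nonneg_left _ (by linarith)
      apply inv_anti₀ (by positivity)
      nlinarith
    simp only [hLdef]; linarith
  have hbmono : ∀ x y : ℝ, 0 < x → 0 < y → (b x - b y) * (x - y) ≤ 0 := by
    intro x y hx0 hy0
    have h1 : (b x - b y) * (x - y) = -(((m + 1/2) * (x*y)⁻¹ + k/2) * (x - y)^2) := by
      rw [hb x hx0, hb y hy0]; field_simp; ring
    rw [h1, neg_nonpos]
    positivity
  have hzc : ContinuousOn z (Set.Icc 0 T) := holder_cont59 hα0 hzHolder
  have hgc : ContinuousOn g (Set.Icc 0 T) := by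
    apply ContinuousOn.sub
    · exact (continuousOn_const.mul (hzc.inv₀ (fun t ht => (hz0 t ht).ne')))
    · exact continuousOn_const.mul hzc
  have hgint : ∀ u v : ℝ, u ∈ Set.Icc (0:ℝ) T → v ∈ Set.Icc (0:ℝ) T →
      IntervalIntegrable g MeasureTheory.volume u v := by
    intro u v hu hv
    exact (hgc.mono (Set.uIcc_subset_Icc hu hv)).intervalIntegrable
  have hzeqg : ∀ t ∈ Set.Icc (0:ℝ) T,
      z t = z 0 + (∫ s in (0:ℝ)..t, g s) + (M t - M 0) := by
    intro t ht
    have hcongr : (∫ s in (0:ℝ)..t, b (z s)) = ∫ s in (0:ℝ)..t, g s := by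
      apply intervalIntegral.integral_congr
      intro s hs
      exact hbz s (Set.uIcc_subset_Icc ⟨le_refl 0, hT.le⟩ ht hs)
    rw [← hcongr]; exact hzeq t ht
  refine ⟨(3*L*Kz*T + 2*Kz) * T ^ α + 1, by positivity, ?_⟩
  intro n hn zin hzin t ht
  obtain ⟨hzin0, hzinrec⟩ := hzin
  have hn0 : (0:ℝ) < n := by exact_mod_cast hn
  set Δ : ℝ := T / n with hΔdef
  have hΔ0 : 0 < Δ := by positivity
  have hnΔ : (n:ℝ) * Δ = T := by rw [hΔdef]; field_simp
  have hgrid : ∀ i : ℕ, i ≤ n → (i:ℝ) * T / n ∈ Set.Icc (0:ℝ) T := by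
    intro i hi
    constructor
    · positivity
    · rw [div_le_iff₀ hn0]
      have : (i:ℝ) ≤ n := by exact_mod_cast hi
      nlinarith
  have hgrid' : ∀ i : ℕ, i < n → ((i:ℝ)+1) * T / n ∈ Set.Icc (0:ℝ) T := by
    intro i hi
    have h := hgrid (i+1) hi
    push_cast at h
    exact h
  have hRnn : 0 ≤ L * Kz * Δ ^ α * Δ := by positivity
  set R : ℝ := L * Kz * Δ ^ α * Δ with hRdef
  have hstep : ∀ i : ℕ, i < n →
      z (((i:ℝ)+1) * T / n) = z ((i:ℝ) * T / n)
        + (∫ s in ((i:ℝ) * T / n)..(((i:ℝ)+1) * T / n), g s)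
        + (M (((i:ℝ)+1) * T / n) - M ((i:ℝ) * T / n)) := by
    intro i hi
    have h1 := hzeqg ((i:ℝ) * T / n) (hgrid i hi.le)
    have h2 := hzeqg (((i:ℝ)+1) * T / n) (hgrid' i hi)
    have hadd : (∫ s in (0:ℝ)..((i:ℝ) * T / n), g s)
        + (∫ s in ((i:ℝ) * T / n)..(((i:ℝ)+1) * T / n), g s)
        = ∫ s in (0:ℝ)..(((i:ℝ)+1) * T / n), g s :=
      intervalIntegral.integral_add_adjacent_intervals
        (hgint 0 _ ⟨le_refl 0, hT.le⟩ (hgrid i hi.le))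
        (hgint _ _ (hgrid i hi.le) (hgrid' i hi))
    linarith
  have hr : ∀ i : ℕ, i < n →
      |g (((i:ℝ)+1) * T / n) * Δ
        - ∫ s in ((i:ℝ) * T / n)..(((i:ℝ)+1) * T / n), g s| ≤ R := by
    intro i hi
    have huv : (((i:ℝ)+1) * T / n) - ((i:ℝ) * T / n) = Δ := by
      rw [hΔdef]; ring
    have huvle : ((i:ℝ) * T / n) ≤ ((i:ℝ)+1) * T / n := by linarith
    have hvmem := hgrid' i hi
    have humem := hgrid i hi.le
    have hint1 : IntervalIntegrable g MeasureTheory.volume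
        ((i:ℝ) * T / n) (((i:ℝ)+1) * T / n) := hgint _ _ humem hvmem
    have hconst : (∫ _ in ((i:ℝ) * T / n)..(((i:ℝ)+1) * T / n),
        (g (((i:ℝ)+1) * T / n) : ℝ)) = g (((i:ℝ)+1) * T / n) * Δ := by
      rw [intervalIntegral.integral_const, smul_eq_mul, huv]; ring
    have heq : g (((i:ℝ)+1) * T / n) * Δ
        - (∫ s in ((i:ℝ) * T / n)..(((i:ℝ)+1) * T / n), g s)
        = ∫ s in ((i:ℝ) * T / n)..(((i:ℝ)+1) * T / n),
            (g (((i:ℝ)+1) * T / n) - g s) := by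
      rw [intervalIntegral.integral_sub intervalIntegrable_const hint1, hconst]
    rw [heq]
    have hbound : ∀ s ∈ Set.uIoc ((i:ℝ) * T / n) (((i:ℝ)+1) * T / n),
        ‖g (((i:ℝ)+1) * T / n) - g s‖ ≤ L * Kz * Δ ^ α := by
      intro s hs
      rw [Set.uIoc_of_le huvle] at hs
      have hsmem : s ∈ Set.Icc (0:ℝ) T :=
        ⟨humem.1.trans hs.1.le, hs.2.trans hvmem.2⟩
      rw [Real.norm_eq_abs, ← hbz _ hvmem, ← hbz s hsmem]
      have h2 : |b (z (((i:ℝ)+1) * T / n)) - b (z s)|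
          ≤ L * |z (((i:ℝ)+1) * T / n) - z s| :=
        hblip _ _ (hinf _ hvmem) (hinf s hsmem)
      have h3 : |z (((i:ℝ)+1) * T / n) - z s| ≤ Kz * |(((i:ℝ)+1) * T / n) - s| ^ α :=
        hzHolder s hsmem _ hvmem
      have h4 : |(((i:ℝ)+1) * T / n) - s| ^ α ≤ Δ ^ α := by
        apply Real.rpow_le_rpow (abs_nonneg _) _ hα0.le
        rw [abs_of_nonneg (by linarith [hs.2])]
        linarith [hs.1, huv]
      calc |b (z (((i:ℝ)+1) * T / n)) - b (z s)|
          ≤ L * (Kz * |(((i:ℝ)+1) * T / n) - s| ^ α) :=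
            h2.trans (mul_le_mul_of_nonneg_left h3 hL0.le)
        _ ≤ L * (Kz * Δ ^ α) :=
            mul_le_mul_of_nonneg_left (mul_le_mul_of_nonneg_left h4 hKz) hL0.le
        _ = L * Kz * Δ ^ α := by ring
    have hN := intervalIntegral.norm_integral_le_of_norm_le_const hbound
    rw [Real.norm_eq_abs] at hN
    calc |∫ s in ((i:ℝ) * T / n)..(((i:ℝ)+1) * T / n),
            (g (((i:ℝ)+1) * T / n) - g s)|
        ≤ L * Kz * Δ ^ α * |(((i:ℝ)+1) * T / n) - ((i:ℝ) * T / n)| := hN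
      _ = R := by rw [huv, abs_of_pos hΔ0, hRdef]
  -- main inductive error bound
  have E : ∀ i : ℕ, i ≤ n → |zn n i - z ((i:ℝ) * T / n)| ≤ i * R := by
    intro i
    induction i with
    | zero => intro _; simp [hzn0]
    | succ i ih =>
      intro hi1
      have hi : i < n := hi1
      have hEi := ih hi.le
      have hvmem := hgrid' i hi
      obtain ⟨hznpos, hznr⟩ := hznrec n hn i hi
      have hzv := hstep i hi
      have hbzv : b (z (((i:ℝ)+1) * T / n)) = g (((i:ℝ)+1) * T / n) := hbz _ hvmem
      have hrb := hr i hi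
      have hID : zn n (i+1) - z (((i:ℝ)+1) * T / n)
          = (zn n i - z ((i:ℝ) * T / n))
          + (b (zn n (i+1)) - b (z (((i:ℝ)+1) * T / n))) * Δ
          + (g (((i:ℝ)+1) * T / n) * Δ
              - ∫ s in ((i:ℝ) * T / n)..(((i:ℝ)+1) * T / n), g s) := by
        rw [hbzv, hΔdef]
        linear_combination hznr - hzv
      have hmon : (zn n (i+1) - z (((i:ℝ)+1) * T / n))
          * (b (zn n (i+1)) - b (z (((i:ℝ)+1) * T / n))) ≤ 0 := by
        rw [mul_comm]
        exact hbmono (zn n (i+1)) (z (((i:ℝ)+1) * T / n)) hznpos (hz0 _ hvmem)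
      set ei1 := zn n (i+1) - z (((i:ℝ)+1) * T / n) with hei1h
      set ei := zn n i - z ((i:ℝ) * T / n) with heih
      set r := g (((i:ℝ)+1) * T / n) * Δ
          - ∫ s in ((i:ℝ) * T / n)..(((i:ℝ)+1) * T / n), g s with hrh
      set d := b (zn n (i+1)) - b (z (((i:ℝ)+1) * T / n)) with hdh
      have h1 : ei1 * (ei + r) ≤ |ei1| * (|ei| + R) := by
        calc ei1 * (ei + r) ≤ |ei1 * (ei + r)| := le_abs_self _
          _ = |ei1| * |ei + r| := abs_mul _ _
          _ ≤ |ei1| * (|ei| + |r|) :=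
              mul_le_mul_of_nonneg_left (abs_add_le _ _) (abs_nonneg _)
          _ ≤ |ei1| * (|ei| + R) :=
              mul_le_mul_of_nonneg_left (by linarith) (abs_nonneg _)
      have h2 : ei1 ^ 2 ≤ ei1 * (ei + r) := by
        have hq : ei1 ^ 2 = ei1 * (ei + r) + (ei1 * d) * Δ := by rw [hID]; ring
        have h3 : (ei1 * d) * Δ ≤ 0 := mul_nonpos_of_nonpos_of_nonneg hmon hΔ0.le
        linarith
      have habs : |ei1| ≤ |ei| + R := by
        by_contra hcon
        push_neg at hcon
        have h0 : 0 ≤ |ei| + R := by positivity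
        nlinarith [sq_abs ei1, abs_nonneg ei1]
      have hcast : ((i+1 : ℕ) : ℝ) = (i:ℝ)+1 := by push_cast; ring
      rw [hcast, ← hei1h]
      linarith
  -- conversion of step size powers
  have hnR : (n:ℝ) * R = L * Kz * T * Δ ^ α := by
    calc (n:ℝ) * R = L * Kz * Δ ^ α * ((n:ℝ) * Δ) := by rw [hRdef]; ring
      _ = L * Kz * T * Δ ^ α := by rw [hnΔ]; ring
  have hΔα : Δ ^ α = T ^ α * (n:ℝ) ^ (-α) := by
    rw [hΔdef, div_eq_mul_inv, Real.mul_rpow hT.le (by positivity),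
      Real.rpow_neg (by positivity), ← Real.inv_rpow (by positivity)]
  rcases eq_or_lt_of_le ht.1 with h0 | htpos
  · rw [← h0, hzin0, sub_self, abs_zero]
    positivity
  · have hx0 : 0 < t * n / T := by positivity
    set j := ⌈t * n / T⌉₊ with hj
    have hj1 : 1 ≤ j := Nat.one_le_ceil_iff.mpr hx0
    have hjn : j ≤ n := by
      rw [hj, Nat.ceil_le, div_le_iff₀ hT]
      nlinarith [ht.2]
    set i := j - 1 with hidef
    have hin : i < n := by omega
    have hij : (i:ℝ) = (j:ℝ) - 1 := by
      rw [hidef]; push_cast [hj1]; ring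
    have hlow : (i:ℝ) * T / n < t := by
      have h1 : (j:ℝ) < t * n / T + 1 := Nat.ceil_lt_add_one hx0.le
      have h2 : (i:ℝ) < t * n / T := by rw [hij]; linarith
      have h3 : (i:ℝ) * T < t * n := (lt_div_iff₀ hT).mp h2
      rw [div_lt_iff₀ hn0]
      linarith
    have hhigh : t ≤ ((i:ℝ)+1) * T / n := by
      have h1 : t * n / T ≤ (j:ℝ) := Nat.le_ceil _
      have h2 : t * n ≤ (j:ℝ) * T := (div_le_iff₀ hT).mp h1
      rw [le_div_iff₀ hn0, hij]
      linarith
    have hmemIoc : t ∈ Set.Ioc ((i:ℝ) * T / n) (((i:ℝ)+1) * T / n) := ⟨hlow, hhigh⟩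
    have hzint := hzinrec i hin t hmemIoc
    have humem := hgrid i hin.le
    have hvmem := hgrid' i hin
    have huv : (((i:ℝ)+1) * T / n) - ((i:ℝ) * T / n) = Δ := by rw [hΔdef]; ring
    have hE1 : |zn n i - z ((i:ℝ) * T / n)| ≤ (n:ℝ) * R := by
      calc |zn n i - z ((i:ℝ) * T / n)| ≤ (i:ℝ) * R := E i hin.le
        _ ≤ (n:ℝ) * R := by
            apply mul_le_mul_of_nonneg_right _ hRnn
            exact_mod_cast hin.le
    have hE2 : |zn n (i+1) - z (((i:ℝ)+1) * T / n)| ≤ (n:ℝ) * R := by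
      have hE := E (i+1) hin
      push_cast at hE
      calc |zn n (i+1) - z (((i:ℝ)+1) * T / n)| ≤ ((i:ℝ)+1) * R := hE
        _ ≤ (n:ℝ) * R := by
            apply mul_le_mul_of_nonneg_right _ hRnn
            have : ((i:ℕ):ℝ) + 1 ≤ (n:ℝ) := by exact_mod_cast hin
            linarith
    have hz1 : |z ((i:ℝ) * T / n) - z t| ≤ Kz * Δ ^ α := by
      have h1 := hzHolder t ht ((i:ℝ) * T / n) humem
      have h2 : |((i:ℝ) * T / n) - t| ^ α ≤ Δ ^ α := by
        apply Real.rpow_le_rpow (abs_nonneg _) _ hα0.le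
        rw [abs_of_nonpos (by linarith)]
        linarith [hmemIoc.2]
      calc |z ((i:ℝ) * T / n) - z t| ≤ Kz * |((i:ℝ) * T / n) - t| ^ α := h1
        _ ≤ Kz * Δ ^ α := mul_le_mul_of_nonneg_left h2 hKz
    have hz2 : |z (((i:ℝ)+1) * T / n) - z ((i:ℝ) * T / n)| ≤ Kz * Δ ^ α := by
      have h1 := hzHolder ((i:ℝ) * T / n) humem (((i:ℝ)+1) * T / n) hvmem
      rw [huv, abs_of_pos hΔ0] at h1
      exact h1
    have hdiff : |zn n (i+1) - zn n i| ≤ 2 * ((n:ℝ) * R) + Kz * Δ ^ α := by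
      have hdec : zn n (i+1) - zn n i
          = ((zn n (i+1) - z (((i:ℝ)+1) * T / n)) - (zn n i - z ((i:ℝ) * T / n)))
            + (z (((i:ℝ)+1) * T / n) - z ((i:ℝ) * T / n)) := by ring
      rw [hdec]
      calc |((zn n (i+1) - z (((i:ℝ)+1) * T / n)) - (zn n i - z ((i:ℝ) * T / n)))
            + (z (((i:ℝ)+1) * T / n) - z ((i:ℝ) * T / n))|
          ≤ |(zn n (i+1) - z (((i:ℝ)+1) * T / n)) - (zn n i - z ((i:ℝ) * T / n))|
            + |z (((i:ℝ)+1) * T / n) - z ((i:ℝ) * T / n)| := abs_add_le _ _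
        _ ≤ |zn n (i+1) - z (((i:ℝ)+1) * T / n)| + |zn n i - z ((i:ℝ) * T / n)|
            + |z (((i:ℝ)+1) * T / n) - z ((i:ℝ) * T / n)| := by
            linarith [abs_sub (zn n (i+1) - z (((i:ℝ)+1) * T / n))
              (zn n i - z ((i:ℝ) * T / n))]
        _ ≤ 2 * ((n:ℝ) * R) + Kz * Δ ^ α := by linarith
    have hmain : |zin t - z t| ≤ 3 * ((n:ℝ) * R) + 2 * (Kz * Δ ^ α) := by
      have hdec : zin t - z t
          = (zn n i - z ((i:ℝ) * T / n))
            + ((zn n (i+1) - zn n i) / Δ) * (t - (i:ℝ) * T / n)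
            + (z ((i:ℝ) * T / n) - z t) := by
        rw [hzint, hΔdef]; ring
      have hterm2 : |((zn n (i+1) - zn n i) / Δ) * (t - (i:ℝ) * T / n)|
          ≤ 2 * ((n:ℝ) * R) + Kz * Δ ^ α := by
        rw [abs_mul, abs_div, abs_of_pos hΔ0,
          abs_of_nonneg (by linarith [hmemIoc.1] : (0:ℝ) ≤ t - (i:ℝ) * T / n),
          div_mul_eq_mul_div, div_le_iff₀ hΔ0]
        calc |zn n (i+1) - zn n i| * (t - (i:ℝ) * T / n)
            ≤ |zn n (i+1) - zn n i| * Δ := by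
              apply mul_le_mul_of_nonneg_left _ (abs_nonneg _)
              linarith [hmemIoc.2]
          _ ≤ (2 * ((n:ℝ) * R) + Kz * Δ ^ α) * Δ :=
              mul_le_mul_of_nonneg_right hdiff hΔ0.le
      rw [hdec]
      calc |(zn n i - z ((i:ℝ) * T / n))
            + ((zn n (i+1) - zn n i) / Δ) * (t - (i:ℝ) * T / n)
            + (z ((i:ℝ) * T / n) - z t)|
          ≤ |(zn n i - z ((i:ℝ) * T / n))
              + ((zn n (i+1) - zn n i) / Δ) * (t - (i:ℝ) * T / n)|
            + |z ((i:ℝ) * T / n) - z t| := abs_add_le _ _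
        _ ≤ |zn n i - z ((i:ℝ) * T / n)|
            + |((zn n (i+1) - zn n i) / Δ) * (t - (i:ℝ) * T / n)|
            + |z ((i:ℝ) * T / n) - z t| := by
            linarith [abs_add_le (zn n i - z ((i:ℝ) * T / n))
              (((zn n (i+1) - zn n i) / Δ) * (t - (i:ℝ) * T / n))]
        _ ≤ 3 * ((n:ℝ) * R) + 2 * (Kz * Δ ^ α) := by linarith
    have hnα : 0 < (n:ℝ) ^ (-α) := Real.rpow_pos_of_pos hn0 _
    rw [hΔα] at hnR hmain
    have hfin : 3 * ((n:ℝ) * R) + 2 * (Kz * (T ^ α * (n:ℝ) ^ (-α)))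
        ≤ ((3*L*Kz*T + 2*Kz) * T ^ α + 1) * (n:ℝ) ^ (-α) := by
      nlinarith [hnα]
    linarith
end

section
/- Let m > 0, α₀ ∈ (0,1), ε > 0 and ξ > 0. For γ ∈ (0, 1/2) define g(γ) = (√2·(1+ε))^{−1/(γ−1)} · (2γ/(2α₀m + 1))^{−γ/(γ−1)} · (γ − 1) · ξ^{−1 − 1/(γ−1)} + ξ. Then g(γ) → (1 − (1+ε)²/(2α₀m + 1))·ξ as γ → 1/2 from the left. -/
/-- The minimum value
`g(γ) = (√2 (1+ε))^{-1/(γ-1)} (2γ/(2α₀m+1))^{-γ/(γ-1)} (γ-1) ξ^{-1-1/(γ-1)} + ξ`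
tends to `(1 - (1+ε)²/(2α₀m+1)) ξ` as `γ → (1/2)⁻`. -/
theorem stmt_10 (m α₀ ε ξ : ℝ) (hm : 0 < m) (hα₀ : α₀ ∈ Set.Ioo (0:ℝ) 1)
    (hε : 0 < ε) (hξ : 0 < ξ) :
    Filter.Tendsto
      (fun γ : ℝ =>
        (Real.sqrt 2 * (1 + ε)) ^ (-1 / (γ - 1))
          * (2 * γ / (2 * α₀ * m + 1)) ^ (-γ / (γ - 1))
          * (γ - 1) * ξ ^ (-1 - 1 / (γ - 1)) + ξ)
      (nhdsWithin (1/2 : ℝ) (Set.Iio (1/2 : ℝ)))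
      (nhds ((1 - (1 + ε)^2 / (2 * α₀ * m + 1)) * ξ)) := by
  have hα := hα₀.1
  have hden : (0:ℝ) < 2 * α₀ * m + 1 := by positivity
  have hsub : ContinuousAt (fun γ : ℝ => γ - 1) (1/2 : ℝ) :=
    (continuousAt_id.sub continuousAt_const)
  have hne : (1/2 : ℝ) - 1 ≠ 0 := by norm_num
  have hb1 : Real.sqrt 2 * (1 + ε) ≠ 0 := by positivity
  have hcont : ContinuousAt
      (fun γ : ℝ =>
        (Real.sqrt 2 * (1 + ε)) ^ (-1 / (γ - 1))
          * (2 * γ / (2 * α₀ * m + 1)) ^ (-γ / (γ - 1))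
          * (γ - 1) * ξ ^ (-1 - 1 / (γ - 1)) + ξ) (1/2 : ℝ) := by
    refine ContinuousAt.add ?_ continuousAt_const
    refine ContinuousAt.mul (ContinuousAt.mul (ContinuousAt.mul ?_ ?_) hsub) ?_
    · exact (Real.continuousAt_const_rpow hb1).comp
        (continuousAt_const.div hsub hne)
    · refine ContinuousAt.rpow ?_ ?_ ?_
      · exact (continuousAt_const.mul continuousAt_id).div continuousAt_const hden.ne'
      · exact (continuousAt_id.neg.div hsub hne)
      · left; norm_num [hden.ne']
    · exact (Real.continuousAt_const_rpow hξ.ne').comp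
        (continuousAt_const.sub (continuousAt_const.div hsub hne))
  have h := hcont.tendsto.mono_left (nhdsWithin_le_nhds (s := Set.Iio (1/2:ℝ)))
  convert h using 2
  have h1 : (-1 / ((1:ℝ)/2 - 1)) = (2:ℝ) := by norm_num
  have h2 : (-(1/2:ℝ) / ((1:ℝ)/2 - 1)) = (1:ℝ) := by norm_num
  have h3 : (-1 - 1 / ((1:ℝ)/2 - 1)) = (1:ℝ) := by norm_num
  have hs : (Real.sqrt 2 * (1 + ε)) ^ (2:ℝ) = 2 * (1 + ε)^2 := by
    rw [Real.rpow_two, mul_pow, Real.sq_sqrt (by norm_num)]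
  rw [h1, h2, h3, hs, Real.rpow_one, Real.rpow_one]
  field_simp
  ring
end
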